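/- There is no continuous function v : [0, T] → ℝ with T > 3π satisfying all of the following: |v(0)| = |v(T)| = 1, |v(θ)| < 1 for θ ∈ (0, T), v(θ + π) ≠ −v(θ) for all θ ∈ [0, T − π], and v(θ + 2π) ≠ v(θ) for all θ ∈ [0, T − 2π]. -/

import Mathlib

/-!
Normalise to `v 0 = -1`. The two non-crossing conditions say that the continuous functions
`θ ↦ v (θ + π) + v θ` and `θ ↦ v (θ + 2π) - v θ` never vanish, so they keep the signs they have
at `θ = 0`, namely `v π - 1 < 0` and `v (2π) + 1 > 0`. At the other end, `v T = 1` makes the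
first one positive at `T - π`, while `v T = -1` makes the second one negative at `T - 2π`.
-/

open Set Real

theorem ContinuousOn.comp_add_const_Icc {β : Type*} [TopologicalSpace β] {f : ℝ → β}
    {a b : ℝ} (hf : ContinuousOn f (Icc a b)) (c : ℝ) :
    ContinuousOn (fun x => f (x + c)) (Icc (a - c) (b - c)) :=
  hf.comp (continuous_add_const c).continuousOn fun x hx => by
    simpa [← preimage_add_const_Icc] using hx

theorem false_of_arc_from_neg_one {T : ℝ} {v : ℝ → ℝ} (hT : 2 * π < T)
    (hv : ContinuousOn v (Icc 0 T)) (hv0 : v 0 = -1) (hvT : |v T| = 1)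
    (hlt : ∀ θ ∈ Ioo 0 T, |v θ| < 1)
    (hpi : ∀ θ ∈ Icc 0 (T - π), v (θ + π) ≠ -v θ)
    (h2pi : ∀ θ ∈ Icc 0 (T - 2 * π), v (θ + 2 * π) ≠ v θ) : False := by
  have hπ := pi_pos
  have hv_lt : ∀ θ, 0 < θ → θ < T → -1 < v θ ∧ v θ < 1 := fun θ h₀ h₁ =>
    abs_lt.1 (hlt θ ⟨h₀, h₁⟩)
  have hvπ := (hv_lt π hπ (by linarith)).2
  have hv2π := (hv_lt (2 * π) (by linarith) hT).1
  have hshift : ∀ c, 0 ≤ c → ContinuousOn (fun θ => v (θ + c)) (Icc 0 (T - c)) :=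
    fun c hc => (hv.comp_add_const_Icc c).mono (Icc_subset_Icc (by linarith) le_rfl)
  have hrestrict : ∀ c, 0 ≤ c → ContinuousOn v (Icc 0 (T - c)) :=
    fun c hc => hv.mono (Icc_subset_Icc le_rfl (by linarith))
  have hsum : ∀ θ ∈ Icc 0 (T - π), v (θ + π) + v θ < 0 := fun θ hθ =>
    isPreconnected_Icc.gt_of_ne (f := fun θ => v (θ + π) + v θ)
      ((hshift π hπ.le).add (hrestrict π hπ.le))
      (fun θ hθ h => hpi θ hθ (eq_neg_of_add_eq_zero_left h))
      ⟨0, ⟨le_rfl, by linarith⟩, by simp only [zero_add, hv0]; linarith⟩ hθ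
  have hdiff : ∀ θ ∈ Icc 0 (T - 2 * π), 0 < v (θ + 2 * π) - v θ := fun θ hθ =>
    isPreconnected_Icc.lt_of_ne (f := fun θ => v (θ + 2 * π) - v θ)
      ((hshift _ (by linarith)).sub (hrestrict _ (by linarith)))
      (fun θ hθ => sub_ne_zero.2 (h2pi θ hθ))
      ⟨0, ⟨le_rfl, by linarith⟩, by simp only [zero_add, hv0]; linarith⟩ hθ
  rcases (abs_eq zero_le_one).1 hvT with hT1 | hT1
  · have := hsum (T - π) ⟨by linarith, le_rfl⟩
    rw [sub_add_cancel, hT1] at this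
    linarith [hv_lt (T - π) (by linarith) (by linarith)]
  · have := hdiff (T - 2 * π) ⟨by linarith, le_rfl⟩
    rw [sub_add_cancel, hT1] at this
    linarith [hv_lt (T - 2 * π) (by linarith) (by linarith)]

/-- There is no continuous `v : [0,T] → ℝ` with `T > 3π` satisfying
`|v 0| = |v T| = 1`, `|v θ| < 1` on `(0,T)`, `v (θ+π) ≠ −v θ` on `[0, T−π]`, and
`v (θ+2π) ≠ v θ` on `[0, T−2π]`. -/
theorem stmt_2 :
    ¬ ∃ (T : ℝ) (v : ℝ → ℝ), 3 * Real.pi < T ∧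
      ContinuousOn v (Set.Icc 0 T) ∧
      |v 0| = 1 ∧ |v T| = 1 ∧
      (∀ θ ∈ Set.Ioo 0 T, |v θ| < 1) ∧
      (∀ θ ∈ Set.Icc 0 (T - Real.pi), v (θ + Real.pi) ≠ -v θ) ∧
      (∀ θ ∈ Set.Icc 0 (T - 2 * Real.pi), v (θ + 2 * Real.pi) ≠ v θ) := by
  rintro ⟨T, v, hT, hv, hv0, hvT, hlt, hpi, h2pi⟩
  have hT' : 2 * π < T := by linarith [pi_pos]
  rcases (abs_eq zero_le_one).1 hv0 with h1 | h1
  · refine false_of_arc_from_neg_one (v := -v) hT' hv.neg (by simp [h1]) (by simpa using hvT)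
      (by simpa using hlt) (fun θ hθ h => hpi θ hθ ?_) (fun θ hθ h => h2pi θ hθ ?_)
    · simpa [neg_eq_iff_eq_neg] using h
    · simpa using h
  · exact false_of_arc_from_neg_one hT' hv h1 hvT hlt hpi h2pi
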